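/- For every natural number n ≥ 1 and all real numbers y, s, one has L (2n) y s = 2·s^n + ∑_{k=1}^{n} (Nat.choose (n+k) (2k) + Nat.choose (n+k-1) (2k)) · s^(n-k) · y^(2k). -/
import Mathlib


/-- Bivariate Lucas polynomials. -/
def L : ℕ → ℝ → ℝ → ℝ
  | 0, _, _ => 2
  | 1, x, _ => x
  | n + 2, x, s => x * L (n + 1) x s + s * L n x s

def c (n k : ℕ) : ℕ := Nat.choose (n + k) (2 * k) + Nat.choose (n + k - 1) (2 * k)

lemma choose_key (m r : ℕ) :
    (m+4).choose (r+2) + (m+3).choose (r+2) + ((m+2).choose (r+2) + (m+1).choose (r+2))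
    = (m+2).choose r + (m+1).choose r + 2 * ((m+3).choose (r+2) + (m+2).choose (r+2)) := by
  simp [Nat.choose_succ_succ]
  ring

lemma c_key (n j : ℕ) : c (n+3) (j+1) + c (n+1) (j+1) = c (n+2) j + 2 * c (n+2) (j+1) := by
  unfold c
  simp only [show n+3+(j+1) = n+j+4 from by omega, show n+3+(j+1)-1 = n+j+3 from by omega,
    show n+1+(j+1) = n+j+2 from by omega, show n+1+(j+1)-1 = n+j+1 from by omega,
    show n+2+j = n+j+2 from by omega, show n+2+j-1 = n+j+1 from by omega,
    show n+2+(j+1) = n+j+3 from by omega, show n+2+(j+1)-1 = n+j+2 from by omega,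
    show 2*(j+1) = 2*j+2 from by omega]
  exact choose_key (n+j) (2*j)

lemma c_eq_zero {n k : ℕ} (h : n < k) : c n k = 0 := by
  unfold c
  rw [Nat.choose_eq_zero_of_lt (by omega), Nat.choose_eq_zero_of_lt (by omega)]

lemma L_rec (m : ℕ) (y s : ℝ) : L (m+4) y s = (y^2+2*s) * L (m+2) y s - s^2 * L m y s := by
  have h0 : L (m+2) y s = y * L (m+1) y s + s * L m y s := rfl
  have h1 : L (m+3) y s = y * L (m+2) y s + s * L (m+1) y s := rfl
  have h2 : L (m+4) y s = y * L (m+3) y s + s * L (m+2) y s := rfl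
  rw [h2, h1, h0]; ring

lemma L_even (y s : ℝ) (n : ℕ) : L (2*(n+1)) y s =
    2*s^(n+1) + ∑ j ∈ Finset.range (n+1), (c (n+1) (j+1) : ℝ) * s^(n-j) * y^(2*(j+1)) := by
  induction n using Nat.strong_induction_on with
  | _ n ih =>
    match n with
    | 0 =>
      have : L 2 y s = y * y + s * 2 := rfl
      simp [this, c]
      ring
    | 1 =>
      have h2 : L 2 y s = y * y + s * 2 := rfl
      have h3 : L 3 y s = y * L 2 y s + s * y := rfl
      have h4 : L 4 y s = y * L 3 y s + s * L 2 y s := rfl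
      norm_num [Finset.sum_range_succ, h4, h3, h2, c, Nat.choose]
      ring
    | (m+2) =>
      have ih1 := ih m (by omega)
      have ih2 := ih (m+1) (by omega)
      rw [show 2*(m+2+1) = 2*(m+1)+4 from by ring, L_rec,
        show 2*(m+1)+2 = 2*(m+1+1) from by ring, ih1, ih2]
      -- now pure algebra
      -- Goal: (y^2+2s)*(2 s^{m+2} + B) - s^2*(2 s^{m+1} + C) = 2 s^{m+3} + A
      have hA : ∑ j ∈ Finset.range (m+3), (c (m+3) (j+1) : ℝ) * s^(m+2-j) * y^(2*(j+1))
          = ∑ j ∈ Finset.range (m+3),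
            (((c (m+2) j : ℝ) * s^(m+2-j) * y^(2*(j+1))
              + 2 * ((c (m+2) (j+1) : ℝ) * s^(m+2-j) * y^(2*(j+1))))
              - (c (m+1) (j+1) : ℝ) * s^(m+2-j) * y^(2*(j+1))) := by
        refine Finset.sum_congr rfl fun j _ => ?_
        have h := c_key m j
        have h' : (c (m+3) (j+1) : ℝ) + c (m+1) (j+1) = c (m+2) j + 2 * c (m+2) (j+1) := by
          exact_mod_cast congrArg (Nat.cast : ℕ → ℝ) h
        linear_combination (s^(m+2-j) * y^(2*(j+1))) * h'
      rw [hA, Finset.sum_sub_distrib, Finset.sum_add_distrib]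
      -- first sum: shift
      have hB : ∑ j ∈ Finset.range (m+3), (c (m+2) j : ℝ) * s^(m+2-j) * y^(2*(j+1))
          = (∑ j ∈ Finset.range (m+2), (c (m+2) (j+1) : ℝ) * s^(m+1-j) * y^(2*(j+1))) * y^2
            + 2 * s^(m+2) * y^2 := by
        rw [Finset.sum_range_succ' (fun j => (c (m+2) j : ℝ) * s^(m+2-j) * y^(2*(j+1))) (m+2),
          Finset.sum_mul]
        have : (c (m+2) 0 : ℝ) = 2 := by norm_num [c]
        rw [this]
        congr 1
        · refine Finset.sum_congr rfl fun j hj => ?_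
          simp only [Finset.mem_range] at hj
          rw [show m+2-(j+1) = m+1-j from by omega, show 2*(j+1+1) = 2*(j+1)+2 from by omega,
            pow_add]
          ring
      have hC : ∑ j ∈ Finset.range (m+3), 2 * ((c (m+2) (j+1) : ℝ) * s^(m+2-j) * y^(2*(j+1)))
          = 2 * s * ∑ j ∈ Finset.range (m+2), (c (m+2) (j+1) : ℝ) * s^(m+1-j) * y^(2*(j+1)) := by
        rw [Finset.sum_range_succ, c_eq_zero (show m+2 < m+2+1 from by omega), Finset.mul_sum]
        norm_num
        refine Finset.sum_congr rfl fun j hj => ?_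
        simp only [Finset.mem_range] at hj
        rw [show m+2-j = (m+1-j)+1 from by omega, pow_succ]
        ring
      have hD : ∑ j ∈ Finset.range (m+3), (c (m+1) (j+1) : ℝ) * s^(m+2-j) * y^(2*(j+1))
          = s^2 * ∑ j ∈ Finset.range (m+1), (c (m+1) (j+1) : ℝ) * s^(m-j) * y^(2*(j+1)) := by
        rw [Finset.sum_range_succ, Finset.sum_range_succ,
          c_eq_zero (show m+1 < m+2+1 from by omega), c_eq_zero (show m+1 < m+1+1 from by omega),
          Finset.mul_sum]
        norm_num
        refine Finset.sum_congr rfl fun j hj => ?_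
        simp only [Finset.mem_range] at hj
        rw [show m+2-j = (m-j)+2 from by omega, pow_add]
        ring
      rw [hB, hC, hD]
      ring

theorem stmt_8 (n : ℕ) (hn : 1 ≤ n) (y s : ℝ) :
    L (2 * n) y s =
      2 * s ^ n + ∑ k ∈ Finset.Icc 1 n,
        ((Nat.choose (n + k) (2 * k) + Nat.choose (n + k - 1) (2 * k) : ℕ) : ℝ) *
          s ^ (n - k) * y ^ (2 * k) := by
  obtain ⟨m, rfl⟩ : ∃ m, n = m + 1 := ⟨n - 1, by omega⟩
  rw [L_even y s m, ← Finset.Ico_add_one_right_eq_Icc, Finset.sum_Ico_eq_sum_range]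
  congr 1
  rw [show m + 1 + 1 - 1 = m + 1 from by omega]
  refine Finset.sum_congr rfl fun j hj => ?_
  simp only [Finset.mem_range] at hj
  rw [show 1 + j = j + 1 from by omega, show m + 1 - (j + 1) = m - j from by omega]
  rfl
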